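/- For every n ≥ 0, r_n = (Σ_{k=0}^{n} binomial(2n-k, n)) mod 2, where r_n is the Rueppel sequence. -/

import Mathlib

open Classical

/-- The Rueppel sequence: `r n = 1` iff `n + 1` is a power of `2`. -/

noncomputable def rueppel (n : ℕ) : ℕ := if ∃ k : ℕ, n + 1 = 2 ^ k then 1 else 0

/-!
By the hockey-stick identity the sum is `C(2n+1, n+1)`. Lucas' theorem modulo 2 gives
`C(4m+1, 2m+1) ≡ C(2m, m)`, which is odd only for `m = 0`, and `C(4m+3, 2m+2) ≡ C(2m+1, m+1)`;
these are exactly the recursions `r (2m) = [m = 0]` and `r (2m+1) = r m` of the Rueppel sequence.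
-/

lemma Nat.choose_mod_two (N K : ℕ) :
    N.choose K % 2 = (N % 2).choose (K % 2) * (N / 2).choose (K / 2) % 2 :=
  Choose.choose_modEq_choose_mod_mul_choose_div_nat

lemma Nat.centralBinom_mod_two (m : ℕ) : m.centralBinom % 2 = if m = 0 then 1 else 0 := by
  rcases m.eq_zero_or_pos with rfl | hm
  · simp
  · simp [Nat.mod_eq_zero_of_dvd (Nat.two_dvd_centralBinom_of_one_le hm), hm.ne']

lemma rueppel_two_mul (m : ℕ) : rueppel (2 * m) = if m = 0 then 1 else 0 := by
  have hpow : (∃ k : ℕ, 2 * m + 1 = 2 ^ k) ↔ m = 0 := by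
    constructor
    · rintro ⟨_ | k, hk⟩
      · omega
      · rw [pow_succ] at hk
        omega
    · rintro rfl
      exact ⟨0, rfl⟩
  simp only [rueppel, hpow]

lemma rueppel_two_mul_add_one (m : ℕ) : rueppel (2 * m + 1) = rueppel m := by
  have hpow : (∃ k : ℕ, 2 * m + 1 + 1 = 2 ^ k) ↔ ∃ k : ℕ, m + 1 = 2 ^ k := by
    constructor
    · rintro ⟨_ | k, hk⟩
      · omega
      · rw [pow_succ] at hk
        exact ⟨k, by omega⟩
    · rintro ⟨k, hk⟩
      exact ⟨k + 1, by rw [pow_succ]; omega⟩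
  simp only [rueppel, hpow]

lemma choose_four_mul_add_one_mod_two (m : ℕ) :
    (2 * (2 * m) + 1).choose (2 * m + 1) % 2 = m.centralBinom % 2 := by
  rw [Nat.choose_mod_two, Nat.centralBinom_eq_two_mul_choose]
  have hN : (2 * (2 * m) + 1) / 2 = 2 * m := by omega
  have hK : (2 * m + 1) / 2 = m := by omega
  simp [Nat.add_mod, hN, hK]

lemma choose_four_mul_add_three_mod_two (m : ℕ) :
    (2 * (2 * m + 1) + 1).choose (2 * m + 1 + 1) % 2 = (2 * m + 1).choose (m + 1) % 2 := by
  rw [Nat.choose_mod_two]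
  have hN : (2 * (2 * m + 1) + 1) / 2 = 2 * m + 1 := by omega
  have hK : (2 * m + 1 + 1) / 2 = m + 1 := by omega
  simp [Nat.add_mod, hN, hK]

lemma choose_two_mul_add_one_mod_two (n : ℕ) : (2 * n + 1).choose (n + 1) % 2 = rueppel n := by
  induction n using Nat.strong_induction_on with
  | _ n ih =>
    obtain ⟨m, rfl | rfl⟩ := Nat.even_or_odd' n
    · rw [choose_four_mul_add_one_mod_two, Nat.centralBinom_mod_two, rueppel_two_mul]
    · rw [choose_four_mul_add_three_mod_two, ih m (by omega), rueppel_two_mul_add_one]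

lemma sum_range_choose_two_mul_sub (n : ℕ) :
    ∑ k ∈ Finset.range (n + 1), (2 * n - k).choose n = (2 * n + 1).choose (n + 1) := by
  have hockey := Nat.sum_range_add_choose n n
  rw [← two_mul] at hockey
  rw [← hockey, ← Finset.sum_range_reflect]
  refine Finset.sum_congr rfl fun k hk => ?_
  rw [Finset.mem_range] at hk
  congr 1
  omega

theorem rueppel_vertical_half (n : ℕ) :
    rueppel n = (∑ k ∈ Finset.range (n + 1), Nat.choose (2 * n - k) n) % 2 := by
  rw [sum_range_choose_two_mul_sub, choose_two_mul_add_one_mod_two]
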